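/- arXiv:2505.23003 — 3 statements merged into one kernel-verified Lean document; each statement's English description precedes it below -/
import Mathlib

section
/- Let S be a finite nonempty set, P⁰ a probability distribution on S, V : S → ℝ a function, and σ > 0. Then the infimum of E_P[V] over all probability distributions P on S with total variation distance D_TV(P, P⁰) ≤ σ equals -inf_{η ∈ ℝ} ( E_{P⁰}[(η - V(s))₊] + σ·(η - min_{s ∈ S} V(s))₊ - η ). -/
open Finset

lemma pos_part_sum {S : Type*} [Fintype S] (P Q : S → ℝ) (h : ∑ s, P s = ∑ s, Q s) :
    ∑ s, max (P s - Q s) 0 = (∑ s, |P s - Q s|) / 2 := by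
  have : ∀ s : S, max (P s - Q s) 0 = ((P s - Q s) + |P s - Q s|) / 2 := by
    intro s
    rcases le_total 0 (P s - Q s) with hz | hz
    · rw [max_eq_left hz, abs_of_nonneg hz]; ring
    · rw [max_eq_right hz, abs_of_nonpos hz]; ring
  simp_rw [this]
  rw [← Finset.sum_div, Finset.sum_add_distrib, Finset.sum_sub_distrib]
  rw [h]
  ring

lemma weak_dual {S : Type*} [Fintype S] [Nonempty S]
    (P0 P : S → ℝ) (V : S → ℝ) (σ η : ℝ) (hσ : 0 ≤ σ)
    (hP : ∀ s, 0 ≤ P s) (hPsum : ∑ s, P s = 1) (hP0sum : ∑ s, P0 s = 1)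
    (hTV : (∑ s, |P s - P0 s|) / 2 ≤ σ) :
    η - (∑ s, P0 s * max (η - V s) 0) - σ * max (η - ⨅ s, V s) 0 ≤ ∑ s, P s * V s := by
  set m := ⨅ s, V s with hm
  have hmle : ∀ s, m ≤ V s := fun s => ciInf_le (Set.finite_range V).bddBelow s
  -- step 1
  have h1 : η ≤ (∑ s, P s * V s) + ∑ s, P s * max (η - V s) 0 := by
    have : ∀ s : S, P s * η ≤ P s * V s + P s * max (η - V s) 0 := by
      intro s
      have := mul_le_mul_of_nonneg_left (le_max_left (η - V s) 0) (hP s)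
      nlinarith [hP s]
    calc η = ∑ s, P s * η := by rw [← Finset.sum_mul, hPsum, one_mul]
    _ ≤ ∑ s, (P s * V s + P s * max (η - V s) 0) := Finset.sum_le_sum (fun s _ => this s)
    _ = _ := Finset.sum_add_distrib
  -- step 2
  have h2 : ∑ s, P s * max (η - V s) 0 ≤ (∑ s, P0 s * max (η - V s) 0) + σ * max (η - m) 0 := by
    have key : ∀ s : S, P s * max (η - V s) 0 ≤ P0 s * max (η - V s) 0
        + max (P s - P0 s) 0 * max (η - m) 0 := by
      intro s
      have hb : max (η - V s) 0 ≤ max (η - m) 0 :=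
        max_le_max (by linarith [hmle s]) le_rfl
      have hb0 : (0:ℝ) ≤ max (η - V s) 0 := le_max_right _ _
      have h3 : (P s - P0 s) * max (η - V s) 0 ≤ max (P s - P0 s) 0 * max (η - m) 0 := by
        calc (P s - P0 s) * max (η - V s) 0 ≤ max (P s - P0 s) 0 * max (η - V s) 0 :=
              mul_le_mul_of_nonneg_right (le_max_left _ _) hb0
        _ ≤ max (P s - P0 s) 0 * max (η - m) 0 :=
              mul_le_mul_of_nonneg_left hb (le_max_right _ _)
      nlinarith
    calc ∑ s, P s * max (η - V s) 0
        ≤ ∑ s, (P0 s * max (η - V s) 0 + max (P s - P0 s) 0 * max (η - m) 0) :=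
          Finset.sum_le_sum (fun s _ => key s)
      _ = (∑ s, P0 s * max (η - V s) 0) + (∑ s, max (P s - P0 s) 0) * max (η - m) 0 := by
          rw [Finset.sum_add_distrib, Finset.sum_mul]
      _ ≤ (∑ s, P0 s * max (η - V s) 0) + σ * max (η - m) 0 := by
          have := pos_part_sum P P0 (by rw [hPsum, hP0sum])
          have h4 : (∑ s, max (P s - P0 s) 0) ≤ σ := by rw [this]; exact hTV
          have : (0:ℝ) ≤ max (η - m) 0 := le_max_right _ _
          nlinarith
  linarith

lemma construct_caseA {S : Type*} [Fintype S] [Nonempty S]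
    (P0 : S → ℝ) (hP0 : ∀ s, 0 ≤ P0 s) (hP0sum : ∑ s, P0 s = 1)
    (V : S → ℝ) (σ : ℝ) (hσ : 0 < σ) (s0 : S) (hs0 : ∀ s, V s0 ≤ V s)
    (hcase : (∑ s, if V s0 < V s then P0 s else 0) ≤ σ) :
    ∃ P : S → ℝ, ∃ η : ℝ, (∀ s, 0 ≤ P s) ∧ (∑ s, P s = 1) ∧
      (∑ s, |P s - P0 s|) / 2 ≤ σ ∧
      ∑ s, P s * V s =
        -((∑ s, P0 s * max (η - V s) 0) + σ * max (η - ⨅ s, V s) 0 - η) := by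
  classical
  have hm : ⨅ s, V s = V s0 :=
    le_antisymm (ciInf_le (Set.finite_range V).bddBelow s0) (le_ciInf hs0)
  set W : ℝ := ∑ s, if V s0 < V s then P0 s else 0 with hW
  have hW0 : 0 ≤ W := Finset.sum_nonneg fun s _ => by split_ifs <;> simp [hP0 s]
  refine ⟨fun s => P0 s + (if s = s0 then W else 0) - (if V s0 < V s then P0 s else 0),
    V s0, ?_, ?_, ?_, ?_⟩
  · intro s
    by_cases h : s = s0
    · simp [h, lt_irrefl]; linarith [hP0 s0]
    · simp only [h, if_false, add_zero]
      split_ifs with h2 <;> simp [hP0 s]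
  · rw [Finset.sum_sub_distrib, Finset.sum_add_distrib]
    simp [Finset.sum_ite_eq', hP0sum, ← hW]
  · have habs : ∀ s : S, |(P0 s + (if s = s0 then W else 0) - (if V s0 < V s then P0 s else 0)) - P0 s|
        = (if s = s0 then W else 0) + (if V s0 < V s then P0 s else 0) := by
      intro s
      by_cases h : s = s0
      · simp [h, lt_irrefl, abs_of_nonneg hW0]
      · simp only [h, if_false, add_zero, zero_add]
        split_ifs with h2
        · simp [abs_of_nonneg (hP0 s)]
        · simp
    simp_rw [habs]
    rw [Finset.sum_add_distrib]
    simp [Finset.sum_ite_eq', ← hW]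
    linarith
  · have hmax0 : ∀ s : S, max (V s0 - V s) 0 = 0 := fun s => max_eq_right (by linarith [hs0 s])
    have hval : ∀ s : S,
        (P0 s + (if s = s0 then W else 0) - (if V s0 < V s then P0 s else 0)) * V s
        = (P0 s + (if s = s0 then W else 0) - (if V s0 < V s then P0 s else 0)) * V s0 := by
      intro s
      rcases eq_or_lt_of_le (hs0 s) with h | h
      · rw [← h]
      · have hs : s ≠ s0 := fun e => by rw [e] at h; exact lt_irrefl _ h
        simp [hs, h]
    simp_rw [hval, hmax0, hm]
    rw [← Finset.sum_mul]
    have hsum : ∑ s, (P0 s + (if s = s0 then W else 0) - (if V s0 < V s then P0 s else 0)) = 1 := by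
      rw [Finset.sum_sub_distrib, Finset.sum_add_distrib]
      simp [Finset.sum_ite_eq', hP0sum, ← hW]
    rw [hsum]; simp

lemma construct_caseB_aux {S : Type*} [Fintype S] [Nonempty S]
    (P0 : S → ℝ) (hP0 : ∀ s, 0 ≤ P0 s) (hP0sum : ∑ s, P0 s = 1)
    (V : S → ℝ) (σ : ℝ) (hσ : 0 < σ) (s0 : S) (hs0 : ∀ s, V s0 ≤ V s)
    (hm : ⨅ s, V s = V s0)
    (t : ℝ) (hts0 : V s0 < t)
    (htσ : (∑ s, if t < V s then P0 s else 0) ≤ σ)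
    (c δ : ℝ) (hc : c = ∑ s, if V s = t then P0 s else 0)
    (hδ : δ = σ - ∑ s, if t < V s then P0 s else 0)
    (hδ0 : 0 ≤ δ) (hδc : δ < c) (hcpos : 0 < c) (hdc1 : δ / c ≤ 1) (hdc0 : 0 ≤ δ / c) :
    ∃ P : S → ℝ, ∃ η : ℝ, (∀ s, 0 ≤ P s) ∧ (∑ s, P s = 1) ∧
      (∑ s, |P s - P0 s|) / 2 ≤ σ ∧
      ∑ s, P s * V s =
        -((∑ s, P0 s * max (η - V s) 0) + σ * max (η - ⨅ s, V s) 0 - η) := by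
  classical
  set P : S → ℝ := fun s => P0 s + (if s = s0 then σ else 0)
      - (if t < V s then P0 s else 0) - (if V s = t then (δ/c) * P0 s else 0) with hPdef
  have hites : ∀ s : S, s = s0 → ¬ (t < V s) ∧ V s ≠ t := by
    intro s h; rw [h]; exact ⟨not_lt.2 hts0.le, ne_of_lt hts0⟩
  have hsum_c : ∑ s, (if V s = t then (δ/c) * P0 s else 0) = δ := by
    have h1 : ∀ s : S, (if V s = t then (δ/c) * P0 s else 0)
        = (δ/c) * (if V s = t then P0 s else 0) := fun s => by split_ifs <;> simp
    simp_rw [h1]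
    rw [← Finset.mul_sum, ← hc, div_mul_cancel₀ _ hcpos.ne']
  have hsum_s0 : ∑ s, (if s = s0 then σ else 0) = σ := by
    simp [Finset.sum_ite_eq']
  have hsumP : ∑ s, P s = 1 := by
    simp_rw [hPdef]
    rw [Finset.sum_sub_distrib, Finset.sum_sub_distrib, Finset.sum_add_distrib,
      hsum_c, hsum_s0, hP0sum, hδ]
    ring
  refine ⟨P, t, ?_, hsumP, ?_, ?_⟩
  · intro s
    by_cases h : s = s0
    · obtain ⟨h1, h2⟩ := hites s h
      simp only [hPdef, if_pos h, if_neg h1, if_neg h2]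
      linarith [hP0 s]
    · simp only [hPdef, if_neg h]
      rcases lt_trichotomy (V s) t with h2 | h2 | h2
      · rw [if_neg (not_lt.2 h2.le), if_neg (ne_of_lt h2)]
        linarith [hP0 s]
      · rw [if_neg (by rw [h2]; exact lt_irrefl t), if_pos h2]
        nlinarith [hP0 s]
      · rw [if_pos h2, if_neg (ne_of_gt h2)]
        linarith
  · have habs : ∀ s : S, |P s - P0 s| = (if s = s0 then σ else 0)
        + (if t < V s then P0 s else 0) + (if V s = t then (δ/c) * P0 s else 0) := by
      intro s
      by_cases h : s = s0
      · obtain ⟨h1, h2⟩ := hites s h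
        simp only [hPdef, if_pos h, if_neg h1, if_neg h2]
        rw [show P0 s + σ - 0 - 0 - P0 s = σ by ring, abs_of_nonneg hσ.le]
        ring
      · simp only [hPdef, if_neg h]
        rcases lt_trichotomy (V s) t with h2 | h2 | h2
        · rw [if_neg (not_lt.2 h2.le), if_neg (ne_of_lt h2)]
          simp
        · rw [if_neg (by rw [h2]; exact lt_irrefl t), if_pos h2]
          rw [show P0 s + 0 - 0 - δ/c * P0 s - P0 s = -(δ/c * P0 s) by ring, abs_neg,
            abs_of_nonneg (mul_nonneg hdc0 (hP0 s))]
          ring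
        · rw [if_pos h2, if_neg (ne_of_gt h2)]
          rw [show P0 s + 0 - P0 s - 0 - P0 s = -(P0 s) by ring, abs_neg,
            abs_of_nonneg (hP0 s)]
          ring
    simp_rw [habs]
    rw [Finset.sum_add_distrib, Finset.sum_add_distrib, hsum_c, hsum_s0, hδ]
    linarith
  · -- value equality
    have hsum_ct : ∑ s, (if V s = t then (δ/c) * P0 s * V s else 0) = δ * t := by
      have h1 : ∀ s : S, (if V s = t then (δ/c) * P0 s * V s else 0)
          = ((δ/c) * t) * (if V s = t then P0 s else 0) := by
        intro s; split_ifs with h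
        · rw [h]; ring
        · simp
      simp_rw [h1]
      rw [← Finset.mul_sum, ← hc]
      field_simp
    have hsum_s0V : ∑ s, (if s = s0 then σ * V s else 0) = σ * V s0 := by
      simp [Finset.sum_ite_eq']
    have E1 : ∑ s, P s * V s = (∑ s, P0 s * V s) + σ * V s0
        - (∑ s, if t < V s then P0 s * V s else 0) - δ * t := by
      have hpt : ∀ s : S, P s * V s = P0 s * V s + (if s = s0 then σ * V s else 0)
          - (if t < V s then P0 s * V s else 0)
          - (if V s = t then (δ/c) * P0 s * V s else 0) := by
        intro s
        simp only [hPdef]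
        split_ifs <;> ring
      calc ∑ s, P s * V s = ∑ s, (P0 s * V s + (if s = s0 then σ * V s else 0)
          - (if t < V s then P0 s * V s else 0)
          - (if V s = t then (δ/c) * P0 s * V s else 0)) :=
            Finset.sum_congr rfl fun s _ => hpt s
      _ = _ := by
          rw [Finset.sum_sub_distrib, Finset.sum_sub_distrib, Finset.sum_add_distrib,
            hsum_ct, hsum_s0V]
    have E2 : ∑ s, P0 s * max (t - V s) 0 = t - (∑ s, P0 s * V s)
        + (∑ s, if t < V s then P0 s * V s else 0)
        - (∑ s, if t < V s then P0 s else 0) * t := by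
      have hpt : ∀ s : S, P0 s * max (t - V s) 0 = P0 s * t - P0 s * V s
          + (if t < V s then P0 s * V s else 0) - (if t < V s then P0 s else 0) * t := by
        intro s
        rcases le_or_gt (V s) t with h | h
        · rw [max_eq_left (by linarith), if_neg (not_lt.2 h), if_neg (not_lt.2 h)]
          ring
        · rw [max_eq_right (by linarith), if_pos h, if_pos h]
          ring
      rw [Finset.sum_congr rfl fun s _ => hpt s]
      rw [Finset.sum_sub_distrib, Finset.sum_add_distrib, Finset.sum_sub_distrib,
        ← Finset.sum_mul, ← Finset.sum_mul, hP0sum, one_mul]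
    rw [hm, max_eq_left (by linarith)]
    rw [E1, E2, hδ]
    ring

lemma construct_caseB {S : Type*} [Fintype S] [Nonempty S]
    (P0 : S → ℝ) (hP0 : ∀ s, 0 ≤ P0 s) (hP0sum : ∑ s, P0 s = 1)
    (V : S → ℝ) (σ : ℝ) (hσ : 0 < σ) (s0 : S) (hs0 : ∀ s, V s0 ≤ V s)
    (hcase : σ < ∑ s, if V s0 < V s then P0 s else 0) :
    ∃ P : S → ℝ, ∃ η : ℝ, (∀ s, 0 ≤ P s) ∧ (∑ s, P s = 1) ∧
      (∑ s, |P s - P0 s|) / 2 ≤ σ ∧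
      ∑ s, P s * V s =
        -((∑ s, P0 s * max (η - V s) 0) + σ * max (η - ⨅ s, V s) 0 - η) := by
  classical
  have hm : ⨅ s, V s = V s0 :=
    le_antisymm (ciInf_le (Set.finite_range V).bddBelow s0) (le_ciInf hs0)
  set F : ℝ → ℝ := fun v => ∑ s, if v < V s then P0 s else 0 with hF
  have himg_ne : (Finset.image V Finset.univ).Nonempty :=
    ⟨V s0, Finset.mem_image_of_mem V (Finset.mem_univ s0)⟩
  set C : Finset ℝ := (Finset.image V Finset.univ).filter (fun v => F v ≤ σ) with hC
  have hCne : C.Nonempty := by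
    refine ⟨(Finset.image V Finset.univ).max' himg_ne, Finset.mem_filter.2
      ⟨(Finset.image V Finset.univ).max'_mem himg_ne, ?_⟩⟩
    have : F ((Finset.image V Finset.univ).max' himg_ne) = 0 := by
      refine Finset.sum_eq_zero fun s _ => ?_
      have : V s ≤ (Finset.image V Finset.univ).max' himg_ne :=
        Finset.le_max' _ _ (Finset.mem_image_of_mem V (Finset.mem_univ s))
      rw [if_neg (not_lt.2 this)]
    rw [this]; exact hσ.le
  set t : ℝ := C.min' hCne with ht
  have htC : t ∈ C := C.min'_mem hCne
  have ht_img : t ∈ Finset.image V Finset.univ := (Finset.mem_filter.1 htC).1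
  have htσ : F t ≤ σ := (Finset.mem_filter.1 htC).2
  have ht_min : ∀ v ∈ C, t ≤ v := fun v hv => C.min'_le v hv
  -- t > V s0
  have hts0 : V s0 < t := by
    obtain ⟨s1, -, hs1⟩ := Finset.mem_image.1 ht_img
    rcases eq_or_lt_of_le (hs0 s1) with h | h
    · exfalso; rw [h, hs1] at hcase; exact absurd htσ (not_le.2 hcase)
    · rw [← hs1]
      rcases eq_or_lt_of_le (hs0 s1) with h2 | h2
      · exfalso; rw [h2, hs1] at hcase; exact absurd htσ (not_le.2 hcase)
      · exact h2
  set c : ℝ := ∑ s, if V s = t then P0 s else 0 with hc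
  have hc0 : 0 ≤ c := Finset.sum_nonneg fun s _ => by split_ifs <;> simp [hP0 s]
  -- key: σ < c + F t
  have hkey : σ < c + F t := by
    set D : Finset ℝ := (Finset.image V Finset.univ).filter (fun v => v < t) with hD
    have hsplit : ∀ s : S, (∀ v ∈ D, ¬ (v < V s ∧ V s < t)) →
        True := fun _ _ => trivial
    by_cases hDne : D.Nonempty
    · set v' : ℝ := D.max' hDne with hv'
      have hv'D : v' ∈ D := D.max'_mem hDne
      have hv't : v' < t := (Finset.mem_filter.1 hv'D).2
      have hv'img : v' ∈ Finset.image V Finset.univ := (Finset.mem_filter.1 hv'D).1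
      have hv'notC : σ < F v' := by
        by_contra h
        exact absurd (ht_min v' (Finset.mem_filter.2 ⟨hv'img, not_lt.1 h⟩)) (not_le.2 hv't)
      have heq : F v' = c + F t := by
        rw [hF, hc]
        simp only
        rw [← Finset.sum_add_distrib]
        refine Finset.sum_congr rfl fun s _ => ?_
        rcases lt_trichotomy (V s) t with h | h | h
        · have hVsD : V s ∈ D := Finset.mem_filter.2
            ⟨Finset.mem_image_of_mem V (Finset.mem_univ s), h⟩
          have : V s ≤ v' := D.le_max' _ hVsD
          rw [if_neg (not_lt.2 this), if_neg (ne_of_lt h), if_neg (not_lt.2 h.le)]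
          simp
        · rw [if_pos (h ▸ hv't), if_pos h, if_neg (by rw [h]; exact lt_irrefl t)]
          simp
        · rw [if_pos (hv't.trans h), if_neg (ne_of_gt h), if_pos h]
          simp
      linarith
    · have hall : ∀ s : S, t ≤ V s := by
        intro s
        by_contra h
        exact hDne ⟨V s, Finset.mem_filter.2
          ⟨Finset.mem_image_of_mem V (Finset.mem_univ s), not_le.1 h⟩⟩
      have heq : c + F t = 1 := by
        rw [hF, hc]
        simp only
        rw [← Finset.sum_add_distrib, ← hP0sum]
        refine Finset.sum_congr rfl fun s _ => ?_
        rcases eq_or_lt_of_le (hall s) with h | h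
        · rw [if_pos h.symm, if_neg (by rw [← h]; exact lt_irrefl _)]; simp
        · rw [if_neg (ne_of_gt h), if_pos h]; simp
      have hσ1 : σ < 1 := by
        refine lt_of_lt_of_le hcase ?_
        rw [← hP0sum]
        exact Finset.sum_le_sum fun s _ => by split_ifs <;> simp [hP0 s]
      linarith
  set δ : ℝ := σ - F t with hδ
  have hδ0 : 0 ≤ δ := by simp [hδ]; linarith
  have hδc : δ < c := by simp [hδ]; linarith
  have hcpos : 0 < c := lt_of_le_of_lt hδ0 hδc
  have hdc1 : δ / c ≤ 1 := (div_le_one hcpos).2 hδc.le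
  have hdc0 : 0 ≤ δ / c := div_nonneg hδ0 hcpos.le
  exact construct_caseB_aux P0 hP0 hP0sum V σ hσ s0 hs0 hm t hts0 htσ c δ hc hδ hδ0 hδc hcpos hdc1 hdc0

/-- Dual reformulation of the robust expectation under a TV uncertainty set. -/
theorem tv_dual_reformulation {S : Type*} [Fintype S] [Nonempty S]
    (P0 : S → ℝ) (hP0 : ∀ s, 0 ≤ P0 s) (hP0sum : ∑ s, P0 s = 1)
    (V : S → ℝ) (σ : ℝ) (hσ : 0 < σ) :
    sInf {x : ℝ | ∃ P : S → ℝ, (∀ s, 0 ≤ P s) ∧ (∑ s, P s = 1) ∧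
        (∑ s, |P s - P0 s|) / 2 ≤ σ ∧ x = ∑ s, P s * V s} =
      - sInf (Set.range fun η : ℝ =>
        (∑ s, P0 s * max (η - V s) 0) + σ * max (η - ⨅ s, V s) 0 - η) := by
  classical
  set g : ℝ → ℝ := fun η =>
    (∑ s, P0 s * max (η - V s) 0) + σ * max (η - ⨅ s, V s) 0 - η with hg
  set A : Set ℝ := {x : ℝ | ∃ P : S → ℝ, (∀ s, 0 ≤ P s) ∧ (∑ s, P s = 1) ∧
      (∑ s, |P s - P0 s|) / 2 ≤ σ ∧ x = ∑ s, P s * V s} with hA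
  have hAne : A.Nonempty := ⟨∑ s, P0 s * V s, P0, hP0, hP0sum, by simp [hσ.le], rfl⟩
  have hBne : (Set.range g).Nonempty := Set.range_nonempty g
  have hBbdd : BddBelow (Set.range g) := by
    refine ⟨-(∑ s, P0 s * V s), ?_⟩
    rintro b ⟨η, rfl⟩
    have := weak_dual P0 P0 V σ η hσ.le hP0 hP0sum hP0sum (by simp [hσ.le])
    simp only [hg]
    linarith
  have hABdd : BddBelow A := by
    obtain ⟨s0, -, hs0⟩ := Finset.exists_min_image Finset.univ V
      ⟨Classical.arbitrary S, Finset.mem_univ _⟩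
    refine ⟨V s0, ?_⟩
    rintro x ⟨P, hP, hPsum, -, rfl⟩
    calc V s0 = ∑ s, P s * V s0 := by rw [← Finset.sum_mul, hPsum, one_mul]
    _ ≤ ∑ s, P s * V s := Finset.sum_le_sum fun s _ =>
        mul_le_mul_of_nonneg_left (hs0 s (Finset.mem_univ s)) (hP s)
  apply le_antisymm
  · -- strong duality via construction
    obtain ⟨s0, -, hs0⟩ := Finset.exists_min_image Finset.univ V
      ⟨Classical.arbitrary S, Finset.mem_univ _⟩
    have hs0' : ∀ s, V s0 ≤ V s := fun s => hs0 s (Finset.mem_univ s)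
    obtain ⟨P, η, hP, hPsum, hTV, hval⟩ :
        ∃ P : S → ℝ, ∃ η : ℝ, (∀ s, 0 ≤ P s) ∧ (∑ s, P s = 1) ∧
          (∑ s, |P s - P0 s|) / 2 ≤ σ ∧
          ∑ s, P s * V s =
            -((∑ s, P0 s * max (η - V s) 0) + σ * max (η - ⨅ s, V s) 0 - η) := by
      rcases le_or_gt (∑ s, if V s0 < V s then P0 s else 0) σ with h | h
      · exact construct_caseA P0 hP0 hP0sum V σ hσ s0 hs0' h
      · exact construct_caseB P0 hP0 hP0sum V σ hσ s0 hs0' h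
    calc sInf A ≤ ∑ s, P s * V s := csInf_le hABdd ⟨P, hP, hPsum, hTV, rfl⟩
    _ = -(g η) := hval
    _ ≤ -sInf (Set.range g) := neg_le_neg (csInf_le hBbdd ⟨η, rfl⟩)
  · -- weak duality
    refine le_csInf hAne ?_
    rintro x ⟨P, hP, hPsum, hTV, rfl⟩
    rw [neg_le]
    refine le_csInf hBne ?_
    rintro b ⟨η, rfl⟩
    have := weak_dual P0 P V σ η hσ.le hP hPsum hP0sum hTV
    simp only [hg]
    linarith
end

section
/- Let S be a finite nonempty set, P⁰ a probability distribution on S, V : S → ℝ, and σ > 0. If there exists a state s_f ∈ S with V(s_f) = 0 and V(s) ≥ 0 for all s (the 'fail-state' condition), then inf over probability distributions P with D_TV(P, P⁰) ≤ σ of E_P[V] equals -inf_{η ≥ 0} ( E_{P⁰}[(η - V(s))₊] - η·(1 - σ) ), provided σ ≤ 1. -/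
lemma weak_duality_tv {S : Type*} [Fintype S]
    (P0 P V : S → ℝ) (σ η : ℝ)
    (hP0sum : ∑ s, P0 s = 1)
    (hP : ∀ s, 0 ≤ P s) (hPsum : ∑ s, P s = 1)
    (hTV : (∑ s, |P s - P0 s|) / 2 ≤ σ)
    (hVnn : ∀ s, 0 ≤ V s) (hη : 0 ≤ η) :
    η * (1 - σ) - ∑ s, P0 s * max (η - V s) 0 ≤ ∑ s, P s * V s := by
  have hmax0 : ∀ s, (0:ℝ) ≤ max (η - V s) 0 := fun s => le_max_right _ _
  have hmaxη : ∀ s, max (η - V s) 0 ≤ η := fun s => max_le (by linarith [hVnn s]) hη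
  have h1 : ∑ s, P s * (η - max (η - V s) 0) ≤ ∑ s, P s * V s := by
    refine Finset.sum_le_sum fun s _ => mul_le_mul_of_nonneg_left ?_ (hP s)
    rcases le_total (η - V s) 0 with h | h
    · rw [max_eq_right h]; linarith
    · rw [max_eq_left h]; linarith
  have e1 : ∑ s, P s * (η - max (η - V s) 0)
      = η - ∑ s, P s * max (η - V s) 0 := by
    simp only [mul_sub]
    rw [Finset.sum_sub_distrib, ← Finset.sum_mul, hPsum, one_mul]
  have h2 : ∀ s, (P s - P0 s) * max (η - V s) 0
      ≤ (P s - P0 s + |P s - P0 s|) / 2 * η := by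
    intro s
    rcases le_total 0 (P s - P0 s) with h | h
    · rw [abs_of_nonneg h]
      have := hmaxη s
      nlinarith
    · rw [abs_of_nonpos h]
      have := hmax0 s
      nlinarith
  have h3 : ∑ s, (P s - P0 s) * max (η - V s) 0 ≤ σ * η := by
    calc ∑ s, (P s - P0 s) * max (η - V s) 0
        ≤ ∑ s, (P s - P0 s + |P s - P0 s|) / 2 * η :=
          Finset.sum_le_sum fun s _ => h2 s
      _ = ((∑ s, (P s - P0 s)) + ∑ s, |P s - P0 s|) / 2 * η := by
          rw [← Finset.sum_mul, ← Finset.sum_div, Finset.sum_add_distrib]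
      _ = ((∑ s, |P s - P0 s|) / 2) * η := by
          rw [Finset.sum_sub_distrib, hPsum, hP0sum]
          ring
      _ ≤ σ * η := mul_le_mul_of_nonneg_right hTV hη
  have e2 : ∑ s, (P s - P0 s) * max (η - V s) 0
      = ∑ s, P s * max (η - V s) 0 - ∑ s, P0 s * max (η - V s) 0 := by
    simp only [sub_mul]
    rw [Finset.sum_sub_distrib]
  have hr : η * (1 - σ) = η - σ * η := by ring
  linarith [h1, e1.symm ▸ h1]

/-- Dual reformulation under the fail-state assumption (min V = 0). -/
theorem tv_dual_reformulation_fail_state {S : Type*} [Fintype S] [Nonempty S]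
    (P0 : S → ℝ) (hP0 : ∀ s, 0 ≤ P0 s) (hP0sum : ∑ s, P0 s = 1)
    (V : S → ℝ) (σ : ℝ) (hσ : 0 < σ) (hσ1 : σ ≤ 1)
    (sf : S) (hsf : V sf = 0) (hVnn : ∀ s, 0 ≤ V s) :
    sInf {x : ℝ | ∃ P : S → ℝ, (∀ s, 0 ≤ P s) ∧ (∑ s, P s = 1) ∧
        (∑ s, |P s - P0 s|) / 2 ≤ σ ∧ x = ∑ s, P s * V s} =
      - sInf {y : ℝ | ∃ η : ℝ, 0 ≤ η ∧
        y = (∑ s, P0 s * max (η - V s) 0) - η * (1 - σ)} := by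
  classical
  set A : Set ℝ := {x : ℝ | ∃ P : S → ℝ, (∀ s, 0 ≤ P s) ∧ (∑ s, P s = 1) ∧
        (∑ s, |P s - P0 s|) / 2 ≤ σ ∧ x = ∑ s, P s * V s} with hAdef
  set B : Set ℝ := {y : ℝ | ∃ η : ℝ, 0 ≤ η ∧
        y = (∑ s, P0 s * max (η - V s) 0) - η * (1 - σ)} with hBdef
  -- the finite set of values of V
  have hTne : (Finset.image V Finset.univ).Nonempty :=
    ⟨V sf, Finset.mem_image_of_mem V (Finset.mem_univ sf)⟩
  set T : Finset ℝ := Finset.image V Finset.univ with hTdef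
  set C : Finset ℝ := T.filter
    (fun v => (∑ s ∈ Finset.univ.filter (fun s => v < V s), P0 s) ≤ σ) with hCdef
  have hCne : C.Nonempty := by
    refine ⟨T.max' hTne, Finset.mem_filter.mpr ⟨Finset.max'_mem _ _, ?_⟩⟩
    have he : Finset.univ.filter (fun s => T.max' hTne < V s) = ∅ := by
      refine Finset.filter_eq_empty_iff.mpr fun s _ => not_lt.mpr ?_
      exact Finset.le_max' _ _ (Finset.mem_image_of_mem V (Finset.mem_univ s))
    rw [he]
    simpa using hσ.le
  set η0 : ℝ := C.min' hCne with hη0def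
  have hη0C : η0 ∈ C := Finset.min'_mem _ _
  have hη0T : η0 ∈ T := (Finset.mem_filter.mp hη0C).1
  have hη0nn : 0 ≤ η0 := by
    obtain ⟨s0, _, hs0⟩ := Finset.mem_image.mp hη0T
    exact hs0 ▸ hVnn s0
  set m : ℝ := ∑ s ∈ Finset.univ.filter (fun s => η0 < V s), P0 s with hmdef
  set d : ℝ := ∑ s ∈ Finset.univ.filter (fun s => V s = η0), P0 s with hddef
  have hm : m ≤ σ := (Finset.mem_filter.mp hη0C).2
  have hd0 : 0 ≤ d := Finset.sum_nonneg fun s _ => hP0 s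
  -- m + d = P0 {V ≥ η0}
  have hmd : m + d = ∑ s ∈ Finset.univ.filter (fun s => η0 ≤ V s), P0 s := by
    rw [hmdef, hddef, Finset.sum_filter, Finset.sum_filter, Finset.sum_filter,
      ← Finset.sum_add_distrib]
    refine Finset.sum_congr rfl fun s _ => ?_
    rcases lt_trichotomy η0 (V s) with h | h | h
    · simp [h, h.ne', h.le]
    · rw [if_neg (by rw [← h]; exact lt_irrefl _), if_pos h.symm, if_pos h.le]
      ring
    · simp [not_lt.mpr h.le, h.ne, not_le.mpr h]
  -- σ ≤ m + d
  have hσmd : σ ≤ m + d := by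
    rw [hmd]
    by_cases hlow : (T.filter (fun t => t < η0)).Nonempty
    · set v' : ℝ := (T.filter (fun t => t < η0)).max' hlow with hv'def
      have hv'mem := Finset.mem_filter.mp ((T.filter (fun t => t < η0)).max'_mem hlow)
      have hv'T : v' ∈ T := hv'mem.1
      have hv'lt : v' < η0 := hv'mem.2
      have hnotQ : ¬ (∑ s ∈ Finset.univ.filter (fun s => v' < V s), P0 s) ≤ σ := by
        intro h
        exact absurd (Finset.min'_le C v' (Finset.mem_filter.mpr ⟨hv'T, h⟩))
          (not_le.mpr hv'lt)
      have heqf : Finset.univ.filter (fun s => v' < V s)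
          = Finset.univ.filter (fun s => η0 ≤ V s) := by
        ext s
        simp only [Finset.mem_filter, Finset.mem_univ, true_and]
        constructor
        · intro h
          by_contra hc
          push_neg at hc
          have hVsT : V s ∈ T.filter (fun t => t < η0) :=
            Finset.mem_filter.mpr ⟨Finset.mem_image_of_mem V (Finset.mem_univ s), hc⟩
          have := Finset.le_max' _ _ hVsT
          linarith
        · intro h; linarith
      rw [← heqf]
      exact (not_le.mp hnotQ).le
    · have huniv : Finset.univ.filter (fun s => η0 ≤ V s) = Finset.univ := by
        refine Finset.filter_true_of_mem fun s _ => ?_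
        by_contra hc
        push_neg at hc
        exact hlow ⟨V s, Finset.mem_filter.mpr
          ⟨Finset.mem_image_of_mem V (Finset.mem_univ s), hc⟩⟩
      rw [huniv, hP0sum]
      exact hσ1
  -- the scaling factor on the level set
  set l : ℝ := if d = 0 then 1 else 1 - (σ - m)/d with hldef
  have hld : l * d = d - (σ - m) := by
    rw [hldef]
    by_cases h : d = 0
    · rw [if_pos h, h]
      have h2 : σ ≤ m + d := hσmd
      rw [h] at h2
      linarith
    · rw [if_neg h]
      field_simp
  have hl0 : 0 ≤ l := by
    rw [hldef]
    by_cases h : d = 0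
    · simp [h]
    · rw [if_neg h]
      have hdpos : 0 < d := lt_of_le_of_ne hd0 (Ne.symm h)
      have : (σ - m)/d ≤ 1 := by
        rw [div_le_one hdpos]; linarith
      linarith
  have hl1 : l ≤ 1 := by
    rw [hldef]
    by_cases h : d = 0
    · simp [h]
    · rw [if_neg h]
      have hdpos : 0 < d := lt_of_le_of_ne hd0 (Ne.symm h)
      have : 0 ≤ (σ - m)/d := div_nonneg (by linarith) hdpos.le
      linarith
  -- the optimal primal distribution
  set base : S → ℝ := fun s =>
    if η0 < V s then 0 else if V s = η0 then l * P0 s else P0 s with hbasedef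
  have hbase0 : ∀ s, 0 ≤ base s := by
    intro s
    simp only [hbasedef]
    split_ifs with h1 h2
    · exact le_refl _
    · exact mul_nonneg hl0 (hP0 s)
    · exact hP0 s
  have hbaseP0 : ∀ s, base s ≤ P0 s := by
    intro s
    simp only [hbasedef]
    split_ifs with h1 h2
    · exact hP0 s
    · nlinarith [hP0 s]
    · exact le_refl _
  have hdiff : ∀ s, P0 s - base s =
      (if η0 < V s then P0 s else 0) + (if V s = η0 then (1 - l) * P0 s else 0) := by
    intro s
    simp only [hbasedef]
    split_ifs with h1 h2 h2
    · exact absurd (h2 ▸ h1) (lt_irrefl _)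
    · ring
    · ring
    · ring
  have hdiffsum : ∑ s, (P0 s - base s) = σ := by
    have : ∑ s, (P0 s - base s) = m + (1 - l) * d := by
      rw [hmdef, hddef]
      rw [Finset.sum_congr rfl fun s _ => hdiff s, Finset.sum_add_distrib,
        Finset.sum_filter, Finset.sum_filter, Finset.mul_sum]
      congr 1
      refine Finset.sum_congr rfl fun s _ => ?_
      split_ifs <;> ring
    rw [this]
    linarith [hld]
  have hbasesum : ∑ s, base s = 1 - σ := by
    have h := Finset.sum_sub_distrib (s := (Finset.univ : Finset S))
      (f := P0) (g := base)
    rw [hP0sum] at h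
    rw [hdiffsum] at h
    linarith [h]
  set P : S → ℝ := fun s => base s + if s = sf then σ else 0 with hPdef
  have hPnn : ∀ s, 0 ≤ P s := by
    intro s
    simp only [hPdef]
    have := hbase0 s
    split_ifs <;> linarith
  have hPsum : ∑ s, P s = 1 := by
    simp only [hPdef]
    rw [Finset.sum_add_distrib, hbasesum, Finset.sum_ite_eq' Finset.univ sf fun _ => σ]
    simp
  have hPTV : (∑ s, |P s - P0 s|) / 2 ≤ σ := by
    have hpt : ∀ s, |P s - P0 s| ≤ (P0 s - base s) + (if s = sf then σ else 0) := by
      intro s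
      simp only [hPdef]
      by_cases h : s = sf
      · simp only [h, if_true]
        rw [abs_le]
        constructor
        · linarith [hbaseP0 sf, hσ]
        · linarith [hbaseP0 sf]
      · simp only [h, if_false]
        rw [abs_le]
        constructor
        · linarith [hbase0 s, hbaseP0 s]
        · linarith [hbase0 s, hbaseP0 s]
    have hsum : ∑ s, |P s - P0 s| ≤ σ + σ := by
      calc ∑ s, |P s - P0 s|
          ≤ ∑ s, ((P0 s - base s) + if s = sf then σ else 0) :=
            Finset.sum_le_sum fun s _ => hpt s
        _ = σ + σ := by
            rw [Finset.sum_add_distrib, hdiffsum,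
              Finset.sum_ite_eq' Finset.univ sf fun _ => σ]
            simp
    linarith
  -- value of the optimal primal
  have hval : ∑ s, P s * V s = η0 * (1 - σ) - ∑ s, P0 s * max (η0 - V s) 0 := by
    have hPV : ∀ s, P s * V s = base s * V s + (if s = sf then σ * V s else 0) := by
      intro s
      simp only [hPdef]
      split_ifs <;> ring
    have hkey : ∀ s, base s * V s + P0 s * max (η0 - V s) 0 = η0 * base s := by
      intro s
      simp only [hbasedef]
      rcases lt_trichotomy η0 (V s) with h | h | h
      · rw [if_pos h, max_eq_right (by linarith)]
        ring
      · rw [← h, if_neg (lt_irrefl η0), if_pos rfl, sub_self, max_self]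
        ring
      · rw [if_neg (not_lt.mpr h.le), if_neg h.ne, max_eq_left (by linarith)]
        ring
    calc ∑ s, P s * V s
        = ∑ s, (base s * V s + if s = sf then σ * V s else 0) :=
          Finset.sum_congr rfl fun s _ => hPV s
      _ = ∑ s, base s * V s := by
          rw [Finset.sum_add_distrib, Finset.sum_ite_eq' Finset.univ sf fun s => σ * V s]
          simp [hsf]
      _ = ∑ s, (η0 * base s - P0 s * max (η0 - V s) 0) :=
          Finset.sum_congr rfl fun s _ => by linarith [hkey s]
      _ = η0 * (∑ s, base s) - ∑ s, P0 s * max (η0 - V s) 0 := by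
          rw [Finset.sum_sub_distrib, Finset.mul_sum]
      _ = η0 * (1 - σ) - ∑ s, P0 s * max (η0 - V s) 0 := by rw [hbasesum]
  -- memberships and weak duality
  have hvA : (η0 * (1 - σ) - ∑ s, P0 s * max (η0 - V s) 0) ∈ A :=
    ⟨P, hPnn, hPsum, hPTV, hval.symm⟩
  have hgB : ((∑ s, P0 s * max (η0 - V s) 0) - η0 * (1 - σ)) ∈ B := ⟨η0, hη0nn, rfl⟩
  have hweak : ∀ x ∈ A, ∀ y ∈ B, -y ≤ x := by
    rintro x ⟨P', hP'1, hP'2, hP'3, rfl⟩ y ⟨η, hη, rfl⟩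
    have := weak_duality_tv P0 P' V σ η hP0sum hP'1 hP'2 hP'3 hVnn hη
    linarith
  have hAbdd : BddBelow A :=
    ⟨-((∑ s, P0 s * max (η0 - V s) 0) - η0 * (1 - σ)), fun x hx => hweak x hx _ hgB⟩
  have hBbdd : BddBelow B := by
    refine ⟨-(η0 * (1 - σ) - ∑ s, P0 s * max (η0 - V s) 0), fun y hy => ?_⟩
    have := hweak _ hvA y hy
    linarith
  have h1 : sInf A ≤ η0 * (1 - σ) - ∑ s, P0 s * max (η0 - V s) 0 := csInf_le hAbdd hvA
  have h2 : sInf B ≤ (∑ s, P0 s * max (η0 - V s) 0) - η0 * (1 - σ) := csInf_le hBbdd hgB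
  have h3 : -sInf A ≤ sInf B := by
    refine le_csInf ⟨_, hgB⟩ fun y hy => ?_
    have h4 : -y ≤ sInf A := le_csInf ⟨_, hvA⟩ fun x hx => hweak x hx y hy
    linarith
  linarith
end

section
/- Let S be a finite set, P⁰ a probability distribution on S, σ ∈ (0,1], and V : S → ℝ nonnegative with min_s V(s) = 0. Then for every probability distribution P on S with D_TV(P, P⁰) ≤ σ and every η ≥ 0: E_P[V] ≥ -( E_{P⁰}[(η - V)₊] - η·(1-σ) ). That is, weak duality holds: the primal value inf_{D_TV(P,P⁰)≤σ} E_P[V] is at least the dual value -inf_{η≥0}( E_{P⁰}[(η - V)₊] - η(1-σ) ). -/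
/-- Weak duality for the TV-robust expectation under the fail-state assumption. -/
theorem tv_weak_duality {S : Type*} [Fintype S] [Nonempty S]
    (P0 : S → ℝ) (hP0 : ∀ s, 0 ≤ P0 s) (hP0sum : ∑ s, P0 s = 1)
    (σ : ℝ) (hσ0 : 0 < σ) (hσ1 : σ ≤ 1)
    (V : S → ℝ) (hV0 : ∀ s, 0 ≤ V s) (hVmin : ⨅ s, V s = 0) :
    (∀ P : S → ℝ, (∀ s, 0 ≤ P s) → (∑ s, P s = 1) →
        (∑ s, |P s - P0 s|) / 2 ≤ σ →
      ∀ η : ℝ, 0 ≤ η →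
        (∑ s, P s * V s) ≥ -((∑ s, P0 s * max (η - V s) 0) - η * (1 - σ))) ∧
      sInf {x : ℝ | ∃ P : S → ℝ, (∀ s, 0 ≤ P s) ∧ (∑ s, P s = 1) ∧
          (∑ s, |P s - P0 s|) / 2 ≤ σ ∧ x = ∑ s, P s * V s} ≥
        - sInf ((fun η : ℝ => (∑ s, P0 s * max (η - V s) 0) - η * (1 - σ)) ''
          {η : ℝ | 0 ≤ η}) := by
  have key : ∀ P : S → ℝ, (∀ s, 0 ≤ P s) → (∑ s, P s = 1) →
      (∑ s, |P s - P0 s|) / 2 ≤ σ → ∀ η : ℝ, 0 ≤ η →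
      (∑ s, P s * V s) ≥ -((∑ s, P0 s * max (η - V s) 0) - η * (1 - σ)) := by
    intro P hP hPsum hTV η hη
    set f : S → ℝ := fun s => max (η - V s) 0 with hf
    have hf0 : ∀ s, 0 ≤ f s := fun s => le_max_right _ _
    have hfη : ∀ s, f s ≤ η := fun s => max_le (by linarith [hV0 s]) hη
    -- Step A : η - ∑ P f ≤ ∑ P V
    have hA : ∑ s, P s * (η - f s) ≤ ∑ s, P s * V s := by
      apply Finset.sum_le_sum
      intro s _
      have h1 : η - V s ≤ f s := le_max_left _ _
      exact mul_le_mul_of_nonneg_left (by linarith) (hP s)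
    have hA' : ∑ s, P s * (η - f s) = η - ∑ s, P s * f s := by
      simp [mul_sub, Finset.sum_sub_distrib, ← Finset.sum_mul, hPsum]
    -- Step B : ∑ (P - P0) f ≤ σ * η
    have hB : ∑ s, (P s - P0 s) * f s ≤ σ * η := by
      have hsplit : ∀ s, (P s - P0 s) * f s
          = (P s - P0 s) * (f s - η / 2) + (P s - P0 s) * (η / 2) := by
        intro s; ring
      have hzero : ∑ s, (P s - P0 s) * (η / 2) = 0 := by
        rw [← Finset.sum_mul]
        simp [Finset.sum_sub_distrib, hPsum, hP0sum]
      have hbound : ∑ s, (P s - P0 s) * (f s - η / 2)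
          ≤ ∑ s, |P s - P0 s| * (η / 2) := by
        apply Finset.sum_le_sum
        intro s _
        calc (P s - P0 s) * (f s - η / 2)
            ≤ |(P s - P0 s) * (f s - η / 2)| := le_abs_self _
          _ = |P s - P0 s| * |f s - η / 2| := abs_mul _ _
          _ ≤ |P s - P0 s| * (η / 2) := by
              apply mul_le_mul_of_nonneg_left _ (abs_nonneg _)
              rw [abs_le]
              exact ⟨by linarith [hf0 s], by linarith [hfη s]⟩
      have hsum : ∑ s, |P s - P0 s| * (η / 2) ≤ σ * η := by
        rw [← Finset.sum_mul]
        have h1 : (0:ℝ) ≤ ∑ s, |P s - P0 s| :=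
          Finset.sum_nonneg (fun s _ => abs_nonneg (P s - P0 s))
        nlinarith
      calc ∑ s, (P s - P0 s) * f s
          = ∑ s, ((P s - P0 s) * (f s - η / 2) + (P s - P0 s) * (η / 2)) := by
            exact Finset.sum_congr rfl (fun s _ => hsplit s)
        _ = (∑ s, (P s - P0 s) * (f s - η / 2)) + ∑ s, (P s - P0 s) * (η / 2) :=
            Finset.sum_add_distrib
        _ ≤ σ * η := by rw [hzero]; linarith [le_trans hbound hsum]
    have hPf : ∑ s, P s * f s = (∑ s, P0 s * f s) + ∑ s, (P s - P0 s) * f s := by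
      rw [← Finset.sum_add_distrib]
      exact Finset.sum_congr rfl (fun s _ => by ring)
    have := hA
    rw [hA'] at this
    rw [ge_iff_le]
    have : η - ((∑ s, P0 s * f s) + σ * η) ≤ ∑ s, P s * V s := by
      rw [hPf] at this; linarith
    simp only [hf] at this ⊢
    linarith
  refine ⟨key, ?_⟩
  have hdne : ((fun η : ℝ => (∑ s, P0 s * max (η - V s) 0) - η * (1 - σ)) ''
      {η : ℝ | 0 ≤ η}).Nonempty := ⟨_, ⟨0, by simp, rfl⟩⟩
  have hpne : {x : ℝ | ∃ P : S → ℝ, (∀ s, 0 ≤ P s) ∧ (∑ s, P s = 1) ∧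
      (∑ s, |P s - P0 s|) / 2 ≤ σ ∧ x = ∑ s, P s * V s}.Nonempty := by
    exact ⟨∑ s, P0 s * V s, P0, hP0, hP0sum, by simp [hσ0.le], rfl⟩
  rw [ge_iff_le]
  apply le_csInf hpne
  rintro x ⟨P, hP, hPsum, hTV, rfl⟩
  rw [neg_le]
  apply le_csInf hdne
  rintro d ⟨η, hη, rfl⟩
  have := key P hP hPsum hTV η hη
  simp only [ge_iff_le, neg_le] at this ⊢
  linarith
end
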